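/- A connected bipartite graph is α⁺-stable if and only if it has an α⁺-stable spanning tree. -/

import Mathlib

open Finset

variable {V : Type*}

/-- A stable (independent) set of vertices of `G`. -/
def IsStableSet (G : SimpleGraph V) (S : Finset V) : Prop :=
  ∀ u ∈ S, ∀ v ∈ S, ¬ G.Adj u v

/-- The stability number `α(G)`: the maximum cardinality of a stable set. -/
noncomputable def stabNum (G : SimpleGraph V) [Fintype V] : ℕ :=
  sSup {n : ℕ | ∃ S : Finset V, IsStableSet G S ∧ S.card = n}

/-- A stability system of `G`: a stable set of maximum cardinality. -/
def IsStabSystem (G : SimpleGraph V) [Fintype V] (S : Finset V) : Prop :=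
  IsStableSet G S ∧ S.card = stabNum G

/-- `G` is α⁻-stable: deleting any edge leaves the stability number unchanged. -/
def AlphaMinusStable (G : SimpleGraph V) [Fintype V] : Prop :=
  ∀ u v : V, G.Adj u v → stabNum (G.deleteEdges {s(u, v)}) = stabNum G

/-- `G` is α⁺-stable: adding any edge of the complement leaves the stability
number unchanged. -/
def AlphaPlusStable (G : SimpleGraph V) [Fintype V] : Prop :=
  ∀ u v : V, u ≠ v → ¬ G.Adj u v →
    stabNum (G ⊔ SimpleGraph.fromEdgeSet {s(u, v)}) = stabNum G

/-- A matching of `G`, viewed as a set of pairwise non-incident edges. -/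
def IsMatchingSet (G : SimpleGraph V) (M : Finset (Sym2 V)) : Prop :=
  (↑M : Set (Sym2 V)) ⊆ G.edgeSet ∧
    ∀ e ∈ M, ∀ f ∈ M, e ≠ f → ∀ v : V, ¬ (v ∈ e ∧ v ∈ f)

/-- The matching number `μ(G)`. -/
noncomputable def matchNum (G : SimpleGraph V) [Fintype V] : ℕ :=
  sSup {n : ℕ | ∃ M : Finset (Sym2 V), IsMatchingSet G M ∧ M.card = n}

/-- A maximum matching of `G`. -/
def IsMaximumMatching (G : SimpleGraph V) [Fintype V] (M : Finset (Sym2 V)) : Prop :=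
  IsMatchingSet G M ∧ M.card = matchNum G

/-- A perfect matching of `G`: a matching covering every vertex. -/
def IsPerfectMatchingSet (G : SimpleGraph V) (M : Finset (Sym2 V)) : Prop :=
  IsMatchingSet G M ∧ ∀ v : V, ∃ e ∈ M, v ∈ e

/-- A pendant vertex: a vertex of degree one. -/
def IsPendant (G : SimpleGraph V) (v : V) : Prop :=
  (G.neighborSet v).ncard = 1

/-- A set `D` is 2-dominating: every vertex outside `D` has at least two
neighbors in `D`. -/
def Is2Dominating (G : SimpleGraph V) (D : Finset V) : Prop :=
  ∀ v : V, v ∉ D → 2 ≤ ({u : V | u ∈ D ∧ G.Adj v u}).ncard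

/-- A chordal graph: no induced cycle on four or more vertices. -/
def IsChordal (G : SimpleGraph V) : Prop :=
  ∀ n : ℕ, 4 ≤ n → IsEmpty (SimpleGraph.cycleGraph n ↪g G)

/-- A bipartite graph: the vertex set is partitioned into two stable sets. -/
def IsBipartiteGr (G : SimpleGraph V) [Fintype V] [DecidableEq V] : Prop :=
  ∃ C : Finset V, IsStableSet G C ∧ IsStableSet G Cᶜ

/-- A strong unique independence graph: a graph with a unique stability system
whose complement is also stable. -/
def IsStrongUniqueIndep (G : SimpleGraph V) [Fintype V] [DecidableEq V] : Prop :=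
  ∃ S : Finset V, IsStabSystem G S ∧ (∀ S' : Finset V, IsStabSystem G S' → S' = S) ∧
    IsStableSet G Sᶜ

/-- A bistable bipartite graph: its two color classes are its only two
stability systems. -/
def IsBistable (G : SimpleGraph V) [Fintype V] [DecidableEq V] : Prop :=
  ∃ A : Finset V, IsStableSet G A ∧ IsStableSet G Aᶜ ∧
    IsStabSystem G A ∧ IsStabSystem G Aᶜ ∧ A ≠ Aᶜ ∧
    ∀ S : Finset V, IsStabSystem G S → S = A ∨ S = Aᶜ

/-- A vertex cover of `G`. -/
def IsVertexCover (G : SimpleGraph V) (C : Finset V) : Prop :=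
  ∀ u v : V, G.Adj u v → u ∈ C ∨ v ∈ C

/-- A minimum vertex cover of `G`. -/
def IsMinVertexCover (G : SimpleGraph V) [Fintype V] (C : Finset V) : Prop :=
  IsVertexCover G C ∧ ∀ C' : Finset V, IsVertexCover G C' → C.card ≤ C'.card

/-!
A perfect matching `M` of a bipartite graph with colour classes `A`, `Aᶜ` makes both
classes stability systems, since `|S| ≤ |M| ≤ |A|` for every stable set `S`; a non-edge
`uv` misses one of the two classes, so adding it keeps `α`. Conversely, König's inequality
`|V| ≤ α + μ` forces a vertex left exposed by some maximum matching into every stability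
system. Without a perfect matching, connectivity yields two such vertices (if the neighbour
`w` of an exposed vertex `u` is matched to `x`, trading the edge `wx` for `uw` exposes `x`),
and joining them lowers `α`. Hence, apart from the one-vertex graph, a connected bipartite
graph is α⁺-stable iff it has a perfect matching, and a perfect matching, being acyclic,
extends to a spanning tree.
-/

open SimpleGraph

section Stability

variable {G H : SimpleGraph V} {S : Finset V} {u v : V}

lemma IsStableSet.anti (h : G ≤ H) (hS : IsStableSet H S) : IsStableSet G S :=
  fun a ha b hb hab => hS a ha b hb (h hab)

lemma IsStableSet.exists_notMem_of_mem_edgeSet (hS : IsStableSet G S) {e : Sym2 V}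
    (he : e ∈ G.edgeSet) : ∃ v ∈ e, v ∉ S := by
  induction e with
  | h a b =>
    by_contra! hab
    exact hS a (hab a (Sym2.mem_mk_left a b)) b (hab b (Sym2.mem_mk_right a b)) he

lemma isStableSet_sup_edge_iff (huv : u ≠ v) :
    IsStableSet (G ⊔ fromEdgeSet {s(u, v)}) S ↔
      IsStableSet G S ∧ ¬(u ∈ S ∧ v ∈ S) := by
  constructor
  · intro hS
    exact ⟨hS.anti le_sup_left, fun ⟨hu, hv⟩ => hS u hu v hv (Or.inr ⟨rfl, huv⟩)⟩
  · rintro ⟨hS, huvS⟩ a ha b hb (hab | ⟨hab, -⟩)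
    · exact hS a ha b hb hab
    · rcases Sym2.eq_iff.1 hab with ⟨rfl, rfl⟩ | ⟨rfl, rfl⟩
      · exact huvS ⟨ha, hb⟩
      · exact huvS ⟨hb, ha⟩

variable [Fintype V]

lemma bddAbove_card_isStableSet (G : SimpleGraph V) :
    BddAbove {n : ℕ | ∃ S : Finset V, IsStableSet G S ∧ S.card = n} :=
  ⟨Fintype.card V, by rintro n ⟨S, -, rfl⟩; exact S.card_le_univ⟩

lemma IsStableSet.card_le_stabNum (hS : IsStableSet G S) : S.card ≤ stabNum G :=
  le_csSup (bddAbove_card_isStableSet G) ⟨S, hS, rfl⟩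

lemma IsStableSet.isStabSystem_of_stabNum_le (hS : IsStableSet G S) (h : stabNum G ≤ S.card) :
    IsStabSystem G S :=
  ⟨hS, le_antisymm hS.card_le_stabNum h⟩

lemma exists_isStabSystem (G : SimpleGraph V) : ∃ S, IsStabSystem G S := by
  obtain ⟨S, hS, hcard⟩ := Nat.sSup_mem
    (by exact ⟨0, ∅, fun _ h => absurd h (notMem_empty _), rfl⟩) (bddAbove_card_isStableSet G)
  exact ⟨S, hS, hcard⟩

lemma stabNum_anti (h : G ≤ H) : stabNum H ≤ stabNum G := by
  obtain ⟨S, hS, hcard⟩ := exists_isStabSystem H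
  exact hcard ▸ (hS.anti h).card_le_stabNum

lemma stabNum_sup_edge_eq_iff (huv : u ≠ v) :
    stabNum (G ⊔ fromEdgeSet {s(u, v)}) = stabNum G ↔
      ∃ S, IsStabSystem G S ∧ ¬(u ∈ S ∧ v ∈ S) := by
  constructor
  · intro h
    obtain ⟨S, hS, hcard⟩ := exists_isStabSystem (G ⊔ fromEdgeSet {s(u, v)})
    rw [isStableSet_sup_edge_iff huv] at hS
    exact ⟨S, ⟨hS.1, hcard.trans h⟩, hS.2⟩
  · rintro ⟨S, ⟨hS, hcard⟩, huvS⟩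
    refine le_antisymm (stabNum_anti le_sup_left) ?_
    exact hcard ▸ ((isStableSet_sup_edge_iff huv).2 ⟨hS, huvS⟩).card_le_stabNum

lemma alphaPlusStable_iff :
    AlphaPlusStable G ↔
      ∀ u v, u ≠ v → ¬G.Adj u v → ∃ S, IsStabSystem G S ∧ ¬(u ∈ S ∧ v ∈ S) :=
  forall₂_congr fun _ _ => forall_congr' fun huv => forall_congr' fun _ =>
    stabNum_sup_edge_eq_iff huv

end Stability

section Matching

variable {G H : SimpleGraph V} {M N : Finset (Sym2 V)} {S : Finset V}

lemma IsMatchingSet.eq_of_mem_of_mem (hM : IsMatchingSet G M) {e f : Sym2 V} (he : e ∈ M)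
    (hf : f ∈ M) {v : V} (hve : v ∈ e) (hvf : v ∈ f) : e = f :=
  by_contra fun hef => hM.2 e he f hf hef v ⟨hve, hvf⟩

lemma IsMatchingSet.mono (h : G ≤ H) (hM : IsMatchingSet G M) : IsMatchingSet H M :=
  ⟨hM.1.trans (edgeSet_mono h), hM.2⟩

lemma IsMatchingSet.subset (hM : IsMatchingSet G M) (hNM : N ⊆ M) : IsMatchingSet G N :=
  ⟨(coe_subset.2 hNM).trans hM.1, fun e he f hf => hM.2 e (hNM he) f (hNM hf)⟩

lemma IsMatchingSet.insert [DecidableEq V] (hM : IsMatchingSet G M) {f : Sym2 V}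
    (hf : f ∈ G.edgeSet) (hdisj : ∀ e ∈ M, ∀ v ∈ f, v ∉ e) :
    IsMatchingSet G (insert f M) := by
  refine ⟨by simpa [Set.insert_subset_iff] using ⟨hf, hM.1⟩, ?_⟩
  rintro e he e' he' hee' v ⟨hve, hve'⟩
  rw [mem_insert] at he he'
  rcases he with rfl | he <;> rcases he' with rfl | he'
  · exact hee' rfl
  · exact hdisj e' he' v hve hve'
  · exact hdisj e he v hve' hve
  · exact hee' (hM.eq_of_mem_of_mem he he' hve hve')

lemma IsMatchingSet.card_le_of_forall_exists_mem (hM : IsMatchingSet G M) {T : Finset V}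
    (hT : ∀ e ∈ M, ∃ v ∈ T, v ∈ e) : M.card ≤ T.card :=
  card_le_card_of_forall_subsingleton (fun e v => v ∈ e) hT
    fun _ _ _ he _ hf => hM.eq_of_mem_of_mem he.1 hf.1 he.2 hf.2

lemma IsMatchingSet.card_le_of_isStableSet_compl [DecidableEq V] [Fintype V]
    (hM : IsMatchingSet G M) {A : Finset V} (hAc : IsStableSet G Aᶜ) : M.card ≤ A.card :=
  hM.card_le_of_forall_exists_mem fun e he => by
    obtain ⟨v, hve, hv⟩ := hAc.exists_notMem_of_mem_edgeSet (hM.1 he)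
    exact ⟨v, by simpa using hv, hve⟩

lemma IsPerfectMatchingSet.mono (h : G ≤ H) (hM : IsPerfectMatchingSet G M) :
    IsPerfectMatchingSet H M :=
  ⟨hM.1.mono h, hM.2⟩

lemma IsPerfectMatchingSet.card_le_of_isStableSet (hM : IsPerfectMatchingSet G M)
    (hS : IsStableSet G S) : S.card ≤ M.card :=
  card_le_card_of_forall_subsingleton (fun v e => v ∈ e) (fun v _ => hM.2 v)
    fun _ he a ha b hb => by_contra fun hab =>
      hS a ha.1 b hb.1 (G.adj_of_mem_incidenceSet hab ⟨hM.1.1 he, ha.2⟩ ⟨hM.1.1 he, hb.2⟩)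

lemma IsMatchingSet.isAcyclic_fromEdgeSet (hM : IsMatchingSet G M) :
    (fromEdgeSet (M : Set (Sym2 V))).IsAcyclic := by
  intro v c hc
  have hsnd := c.adj_snd hc.not_nil
  have hpen := c.adj_penultimate hc.not_nil
  rw [fromEdgeSet_adj] at hsnd hpen
  refine hM.2 _ hsnd.1 _ hpen.1 ?_ v ⟨Sym2.mem_mk_left _ _, Sym2.mem_mk_right _ _⟩
  intro h
  rcases Sym2.eq_iff.1 h with ⟨-, h⟩ | ⟨-, h⟩
  · exact hsnd.2 h.symm
  · exact hc.snd_ne_penultimate h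

lemma SimpleGraph.Connected.exists_isTree_le_of_isMatchingSet (hc : G.Connected)
    (hM : IsMatchingSet G M) : ∃ T ≤ G, T.IsTree ∧ IsMatchingSet T M := by
  have hMG : fromEdgeSet (M : Set (Sym2 V)) ≤ G := by
    rw [fromEdgeSet_le]
    exact Set.sdiff_subset.trans hM.1
  obtain ⟨T, hMT, hTG, hT⟩ :=
    hc.exists_isTree_le_of_le_of_isAcyclic hMG hM.isAcyclic_fromEdgeSet
  refine ⟨T, hTG, hT, fun e he => edgeSet_mono hMT ?_, hM.2⟩
  rw [edgeSet_fromEdgeSet]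
  exact ⟨he, G.not_isDiag_of_mem_edgeSet (hM.1 he)⟩

lemma isMatchingSet_image_mk_of_injOn [DecidableEq V] {A : Finset V} {R : Finset (V × V)}
    (hR : ∀ p ∈ R, p.1 ∈ A ∧ p.2 ∉ A ∧ G.Adj p.1 p.2)
    (hfst : Set.InjOn Prod.fst (R : Set (V × V))) (hsnd : Set.InjOn Prod.snd (R : Set (V × V))) :
    IsMatchingSet G (R.image fun p => s(p.1, p.2)) ∧ #(R.image fun p => s(p.1, p.2)) = #R := by
  have key : ∀ p ∈ R, ∀ q ∈ R, ∀ v ∈ s(p.1, p.2), v ∈ s(q.1, q.2) → p = q := by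
    rintro ⟨a, b⟩ hp ⟨a', b'⟩ hq v hv hv'
    obtain ⟨ha, hb, -⟩ := hR _ hp
    obtain ⟨ha', hb', -⟩ := hR _ hq
    rcases Sym2.mem_iff.1 hv with rfl | rfl <;> rcases Sym2.mem_iff.1 hv' with h | h
    · exact hfst hp hq h
    · exact absurd (h ▸ ha) hb'
    · exact absurd (h ▸ ha') hb
    · exact hsnd hp hq h
  refine ⟨⟨?_, ?_⟩, card_image_of_injOn fun p hp q hq hpq => ?_⟩
  · intro e he
    obtain ⟨p, hp, rfl⟩ := mem_image.1 (mem_coe.1 he)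
    exact (hR p hp).2.2
  · rintro _ he _ hf hef v ⟨hve, hvf⟩
    obtain ⟨p, hp, rfl⟩ := mem_image.1 he
    obtain ⟨q, hq, rfl⟩ := mem_image.1 hf
    rw [key p hp q hq v hve hvf] at hef
    exact hef rfl
  · exact key p hp q hq p.1 (Sym2.mem_mk_left _ _) (hpq ▸ Sym2.mem_mk_left _ _)

variable [Fintype V]

lemma bddAbove_card_isMatchingSet (G : SimpleGraph V) :
    BddAbove {n : ℕ | ∃ M : Finset (Sym2 V), IsMatchingSet G M ∧ M.card = n} :=
  ⟨Fintype.card (Sym2 V), by rintro n ⟨M, -, rfl⟩; exact M.card_le_univ⟩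

lemma IsMatchingSet.card_le_matchNum (hM : IsMatchingSet G M) : M.card ≤ matchNum G :=
  le_csSup (bddAbove_card_isMatchingSet G) ⟨M, hM, rfl⟩

lemma exists_isMaximumMatching (G : SimpleGraph V) : ∃ M, IsMaximumMatching G M := by
  obtain ⟨M, hM, hcard⟩ := Nat.sSup_mem
    (by exact ⟨0, ∅, ⟨by simp, by simp⟩, rfl⟩) (bddAbove_card_isMatchingSet G)
  exact ⟨M, hM, hcard⟩

end Matching

theorem Finset.exists_partialTransversal {ι β : Type*} [Fintype β] [DecidableEq β]
    (A : Finset ι) (r : ι → β → Prop) [DecidableRel r] (d : ℕ)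
    (h : ∀ s ⊆ A, #s ≤ #{b | ∃ i ∈ s, r i b} + d) :
    ∃ R : Finset (ι × β), #A ≤ #R + d ∧ (∀ p ∈ R, p.1 ∈ A ∧ r p.1 p.2) ∧
      Set.InjOn Prod.fst (R : Set (ι × β)) ∧ Set.InjOn Prod.snd (R : Set (ι × β)) := by
  classical
  -- Hall's theorem after adjoining `d` new elements related to every index
  let r' : A → β ⊕ Fin d → Prop := fun i => Sum.elim (r i) fun _ => True
  have hall : ∀ s : Finset A, #s ≤ #{x | ∃ i ∈ s, r' i x} := by
    intro s
    rcases s.eq_empty_or_nonempty with rfl | ⟨i₀, hi₀⟩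
    · simp
    set N : Finset β := {b | ∃ i ∈ s.map (.subtype _), r i b}
    calc #s = #(s.map (.subtype _)) := (card_map _).symm
      _ ≤ #N + d := h _ fun i hi => by
          obtain ⟨i, -, rfl⟩ := mem_map.1 hi
          exact i.2
      _ = #(N.disjSum (univ : Finset (Fin d))) := by
          rw [card_disjSum, card_univ, Fintype.card_fin]
      _ ≤ #{x | ∃ i ∈ s, r' i x} := card_le_card fun x hx => by
          rcases x with b | j <;> simp [r', N] at hx ⊢
          exacts [hx, ⟨i₀, i₀.2, hi₀⟩]
  obtain ⟨g, hg, hgr⟩ := (Fintype.all_card_le_filter_rel_iff_exists_injective r').1 hall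
  let R : Finset (ι × β) :=
    ({p : A × β | g p.1 = .inl p.2} : Finset (A × β)).image fun p => (p.1.1, p.2)
  have hR : ∀ p ∈ R, ∃ i : A, i.1 = p.1 ∧ g i = .inl p.2 := by
    simp only [R, mem_image, mem_filter, mem_univ, true_and]
    rintro _ ⟨⟨i, b⟩, hib, rfl⟩
    exact ⟨i, rfl, hib⟩
  refine ⟨R, ?_, ?_, ?_, ?_⟩
  · calc #A = #(univ.image g) := by rw [card_image_of_injective _ hg, card_univ, Fintype.card_coe]
      _ ≤ #(R.image (.inl ∘ Prod.snd) ∪ univ.image .inr) := card_le_card fun x hx => by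
          obtain ⟨i, -, rfl⟩ := mem_image.1 hx
          rcases hgi : g i with b | j
          · refine mem_union_left _ (mem_image.2 ⟨(i.1, b), ?_, rfl⟩)
            exact mem_image.2 ⟨(i, b), by simpa using hgi, rfl⟩
          · exact mem_union_right _ (mem_image_of_mem _ (mem_univ j))
      _ ≤ #R + d := (card_union_le _ _).trans <| add_le_add card_image_le <|
          card_image_le.trans (by rw [card_univ, Fintype.card_fin])
  · intro p hp
    obtain ⟨i, hi, hgi⟩ := hR p hp
    have := hgr i
    rw [hgi] at this
    exact hi ▸ ⟨i.2, this⟩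
  · intro p hp q hq hpq
    obtain ⟨i, hi, hgi⟩ := hR p hp
    obtain ⟨j, hj, hgj⟩ := hR q hq
    have hij : i = j := Subtype.ext (hi.trans (hpq.trans hj.symm))
    rw [hij, hgj, Sum.inl.injEq] at hgi
    exact Prod.ext hpq hgi.symm
  · intro p hp q hq hpq
    obtain ⟨i, hi, hgi⟩ := hR p hp
    obtain ⟨j, hj, hgj⟩ := hR q hq
    have hij : i = j := hg (by rw [hgi, hgj, hpq])
    exact Prod.ext (hi.symm.trans (hij ▸ hj)) hpq

section Bipartite

variable [Fintype V] [DecidableEq V] {G : SimpleGraph V} {A : Finset V} {M : Finset (Sym2 V)}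

lemma IsPerfectMatchingSet.alphaPlusStable (hM : IsPerfectMatchingSet G M)
    (hA : IsStableSet G A) (hAc : IsStableSet G Aᶜ) : AlphaPlusStable G := by
  have hsys : ∀ B : Finset V, IsStableSet G B → IsStableSet G Bᶜ → IsStabSystem G B :=
    fun B hB hBc => hB.isStabSystem_of_stabNum_le <| by
      obtain ⟨S, hS, hcard⟩ := exists_isStabSystem G
      calc stabNum G = S.card := hcard.symm
        _ ≤ M.card := hM.card_le_of_isStableSet hS
        _ ≤ B.card := hM.1.card_le_of_isStableSet_compl hBc
  rw [alphaPlusStable_iff]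
  intro u v _ _
  by_cases hu : u ∈ A
  · exact ⟨Aᶜ, hsys Aᶜ hAc (by rwa [compl_compl]), fun h => mem_compl.1 h.1 hu⟩
  · exact ⟨A, hsys A hA hAc, fun h => hu h.1⟩

lemma card_add_card_compl_le_stabNum_add [DecidableRel G.Adj] (hA : IsStableSet G A)
    (hAc : IsStableSet G Aᶜ) {s : Finset V} (hs : s ⊆ A) :
    #s + #Aᶜ ≤ stabNum G + #{b | ∃ a ∈ s, G.Adj a b} := by
  set N : Finset V := {b | ∃ a ∈ s, G.Adj a b}
  have hdisj : Disjoint s (Aᶜ \ N) :=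
    disjoint_left.2 fun a ha ha' => mem_compl.1 (mem_sdiff.1 ha').1 (hs ha)
  have hstable : IsStableSet G (s ∪ (Aᶜ \ N)) := by
    have hN : ∀ a ∈ s, ∀ b ∈ Aᶜ \ N, ¬G.Adj a b := fun a ha b hb hab =>
      (mem_sdiff.1 hb).2 (mem_filter.2 ⟨mem_univ b, a, ha, hab⟩)
    intro a ha b hb hab
    rcases mem_union.1 ha with ha | ha <;> rcases mem_union.1 hb with hb | hb
    · exact hA a (hs ha) b (hs hb) hab
    · exact hN a ha b hb hab
    · exact hN b hb a ha hab.symm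
    · exact hAc a (mem_sdiff.1 ha).1 b (mem_sdiff.1 hb).1 hab
  calc #s + #Aᶜ ≤ #s + #(Aᶜ \ N) + #N := by have := le_card_sdiff N Aᶜ; omega
    _ = #(s ∪ (Aᶜ \ N)) + #N := by rw [card_union_of_disjoint hdisj]
    _ ≤ stabNum G + #N := by gcongr; exact hstable.card_le_stabNum

/-- König's inequality: Hall's condition holds on `A` with deficiency `α - |Aᶜ|`. -/
theorem card_le_stabNum_add_matchNum (hA : IsStableSet G A) (hAc : IsStableSet G Aᶜ) :
    Fintype.card V ≤ stabNum G + matchNum G := by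
  classical
  obtain ⟨R, hRcard, hR, hfst, hsnd⟩ := A.exists_partialTransversal G.Adj (stabNum G - #Aᶜ)
    fun s hs => by have := card_add_card_compl_le_stabNum_add hA hAc hs; omega
  have hRA : ∀ p ∈ R, p.1 ∈ A ∧ p.2 ∉ A ∧ G.Adj p.1 p.2 := fun p hp =>
    ⟨(hR p hp).1, fun h => hA _ (hR p hp).1 _ h (hR p hp).2, (hR p hp).2⟩
  obtain ⟨hM, hMcard⟩ := isMatchingSet_image_mk_of_injOn hRA hfst hsnd
  have := hM.card_le_matchNum
  have := hAc.card_le_stabNum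
  have := card_add_card_compl A
  omega

lemma IsMaximumMatching.mem_of_isStabSystem (hA : IsStableSet G A) (hAc : IsStableSet G Aᶜ)
    (hM : IsMaximumMatching G M) {w : V} (hw : ∀ e ∈ M, w ∉ e) {S : Finset V}
    (hS : IsStabSystem G S) : w ∈ S := by
  by_contra hwS
  have hcover : ∀ e ∈ M, ∃ v ∈ Sᶜ.erase w, v ∈ e := fun e he => by
    obtain ⟨v, hve, hvS⟩ := hS.1.exists_notMem_of_mem_edgeSet (hM.1.1 he)
    exact ⟨v, mem_erase.2 ⟨fun h => hw e he (h ▸ hve), mem_compl.2 hvS⟩, hve⟩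
  have hμ : matchNum G < #Sᶜ := hM.2 ▸
    (hM.1.card_le_of_forall_exists_mem hcover).trans_lt (card_erase_lt_of_mem (mem_compl.2 hwS))
  have := card_add_card_compl S
  have := card_le_stabNum_add_matchNum hA hAc
  have := hS.2
  omega

lemma IsMaximumMatching.exists_ne_exposed [Nontrivial V] (hc : G.Preconnected)
    (hM : IsMaximumMatching G M) {u : V} (hu : ∀ e ∈ M, u ∉ e) :
    ∃ x ≠ u, ∃ M', IsMaximumMatching G M' ∧ ∀ e ∈ M', x ∉ e := by
  obtain ⟨w, huw⟩ := hc.exists_adj_of_nontrivial u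
  by_cases hw : ∀ e ∈ M, w ∉ e
  · exact ⟨w, huw.ne.symm, M, hM, hw⟩
  push Not at hw
  obtain ⟨e, he, hwe⟩ := hw
  set x := Sym2.Mem.other hwe
  have hex : s(w, x) = e := Sym2.other_spec hwe
  have hxe : x ∈ e := hex ▸ Sym2.mem_mk_right w x
  have hxu : x ≠ u := fun h => hu e he (h ▸ hxe)
  have hwx : w ≠ x := (G.mem_edgeSet.1 (hex ▸ hM.1.1 he)).ne
  have huM : s(u, w) ∉ M.erase e := fun h => hu _ (mem_of_mem_erase h) (Sym2.mem_mk_left u w)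
  refine ⟨x, hxu, insert s(u, w) (M.erase e), ⟨?_, ?_⟩, ?_⟩
  · refine (hM.1.subset (erase_subset e M)).insert huw fun f hf v hv hvf => ?_
    obtain ⟨hfe, hf⟩ := mem_erase.1 hf
    rcases Sym2.mem_iff.1 hv with rfl | rfl
    · exact hu f hf hvf
    · exact hfe (hM.1.eq_of_mem_of_mem hf he hvf hwe)
  · rw [card_insert_of_notMem huM, card_erase_add_one he, hM.2]
  · intro f hf hxf
    rcases mem_insert.1 hf with rfl | hf
    · rcases Sym2.mem_iff.1 hxf with h | h
      · exact hxu h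
      · exact hwx h.symm
    · obtain ⟨hfe, hf⟩ := mem_erase.1 hf
      exact hfe (hM.1.eq_of_mem_of_mem hf he hxf hxe)

lemma exists_isPerfectMatchingSet_of_alphaPlusStable [Nontrivial V] (hc : G.Preconnected)
    (hA : IsStableSet G A) (hAc : IsStableSet G Aᶜ) (h : AlphaPlusStable G) :
    ∃ M, IsPerfectMatchingSet G M := by
  obtain ⟨M, hM⟩ := exists_isMaximumMatching G
  by_contra hno
  obtain ⟨u, hu⟩ : ∃ u, ∀ e ∈ M, u ∉ e := by
    by_contra! hcov
    exact hno ⟨M, hM.1, hcov⟩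
  obtain ⟨x, hxu, M', hM', hx⟩ := hM.exists_ne_exposed hc hu
  have hcore : ∀ S, IsStabSystem G S → u ∈ S ∧ x ∈ S := fun S hS =>
    ⟨hM.mem_of_isStabSystem hA hAc hu hS, hM'.mem_of_isStabSystem hA hAc hx hS⟩
  obtain ⟨S₀, hS₀⟩ := exists_isStabSystem G
  obtain ⟨S, hS, hux⟩ := alphaPlusStable_iff.1 h u x hxu.symm
    (hS₀.1 u (hcore S₀ hS₀).1 x (hcore S₀ hS₀).2)
  exact hux (hcore S hS)

end Bipartite

/-- A connected bipartite graph is α⁺-stable if and only if it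
has an α⁺-stable spanning tree. -/
theorem stmt11 {V : Type*} [Fintype V] [DecidableEq V] (G : SimpleGraph V)
    (hc : G.Connected) (hbip : IsBipartiteGr G) :
    AlphaPlusStable G ↔
      ∃ T : SimpleGraph V, T ≤ G ∧ T.IsTree ∧ AlphaPlusStable T := by
  obtain ⟨A, hA, hAc⟩ := hbip
  rcases subsingleton_or_nontrivial V with hV | hV
  · have hplus : ∀ H : SimpleGraph V, AlphaPlusStable H :=
      fun _ u v huv => absurd (Subsingleton.elim u v) huv
    exact ⟨fun _ => ⟨G, le_rfl, ⟨hc, .of_subsingleton⟩, hplus G⟩, fun _ => hplus G⟩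
  constructor
  · intro hG
    obtain ⟨M, hM⟩ := exists_isPerfectMatchingSet_of_alphaPlusStable hc.preconnected hA hAc hG
    obtain ⟨T, hTG, hT, hMT⟩ := hc.exists_isTree_le_of_isMatchingSet hM.1
    have hMT : IsPerfectMatchingSet T M := ⟨hMT, hM.2⟩
    exact ⟨T, hTG, hT, hMT.alphaPlusStable (hA.anti hTG) (hAc.anti hTG)⟩
  · rintro ⟨T, hTG, hT, hTplus⟩
    obtain ⟨M, hM⟩ := exists_isPerfectMatchingSet_of_alphaPlusStable hT.connected.preconnected
      (hA.anti hTG) (hAc.anti hTG) hTplus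
    exact (hM.mono hTG).alphaPlusStable hA hAc
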